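/- Let G be a group with surjective marking μ : Ã* → G (A finite), let 𝒫 be a finite peripheral structure on G, let ν : ℕ → ℕ be non-decreasing, and suppose (G, 𝒫) satisfies Property rBP_ν. Let H, K ≤ G be relatively quasi-convex subgroups with common constant of relative quasi-convexity k. Then: (1) for every g ∈ G such that K ∩ H^g is a hyperbolic subgroup, there exists s ∈ G with |s|_A ≤ 2ν(k) and HgK = HsK; (2) moreover there exist such s and an element r' ∈ K with K ∩ H^g = (K ∩ H^s)^{r'⁻¹}; consequently every hyperbolic intersection K ∩ H^g (g ∈ G) is conjugate in K to a member of the finite family { K ∩ H^s : s ∈ G, |s|_A ≤ 2ν(k), K ∩ H^s hyperbolic }. -/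
import Mathlib


open List

/-- A word over the alphabet Ã = A ∪ A⁻¹ is a `List (A × Bool)`: the letter `(a, true)`
stands for `a` and `(a, false)` for the formal inverse `a⁻¹`. A word is *reduced* if it
has no factor `a·a⁻¹` or `a⁻¹·a`. -/
def Reduced {A : Type*} (w : List (A × Bool)) : Prop :=
  w.Chain' fun p q => ¬(p.1 = q.1 ∧ q.2 = !p.2)

variable {A : Type*} [Fintype A] {G : Type*} [Group G]

/-- Evaluation in `G` of a word over Ã, determined by the images `f a` of the letters.
This is the (inverse-respecting) monoid homomorphism μ : Ã* → G. -/
def eval (f : A → G) (w : List (A × Bool)) : G :=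
  (w.map fun p => if p.2 then f p.1 else (f p.1)⁻¹).prod

/-- Word length of `g ∈ G` with respect to the generators `A`:
the least length of a word over Ã mapping onto `g`. -/
noncomputable def wlen (f : A → G) (g : G) : ℕ :=
  sInf {n | ∃ w : List (A × Bool), eval f w = g ∧ w.length = n}

/-- A rational structure: `L` is a regular language of reduced words with μ(L) = G. -/
def RationalStructure (f : A → G) (L : Set (List (A × Bool))) : Prop :=
  Language.IsRegular (L : Language (A × Bool)) ∧ (∀ w ∈ L, Reduced w) ∧
    ∀ g : G, ∃ w ∈ L, eval f w = g

/-- `H` is L-quasi-convex with constant `k`: for every `w ∈ L` with `μ(w) ∈ H` and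
every prefix `u` of `w`, there is `h ∈ H` with `|h⁻¹ μ(u)| ≤ k`. -/
def QCW (f : A → G) (L : Set (List (A × Bool))) (H : Subgroup G) (k : ℕ) : Prop :=
  ∀ w ∈ L, eval f w ∈ H → ∀ u, u <+: w → ∃ h ∈ H, wlen f (h⁻¹ * eval f u) ≤ k

/-- The set of right cosets `H·μ(u)` where `u` ranges over prefixes of words
`w ∈ L` with `μ(w) ∈ H` (the vertex set of the Stallings graph Γ_L(H)). -/
def VL (f : A → G) (L : Set (List (A × Bool))) (H : Subgroup G) : Set (Set G) :=
  {S | ∃ w ∈ L, eval f w ∈ H ∧ ∃ u, u <+: w ∧ S = {x | ∃ h ∈ H, x = h * eval f u}}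

/-- The conjugate subgroup H^g = g⁻¹Hg. -/
def conjG {G : Type*} [Group G] (H : Subgroup G) (g : G) : Subgroup G :=
  Subgroup.map ((MulAut.conj g⁻¹).toMonoidHom) H

/-- B = ⋃_{P ∈ PS} (P \ {1}): the nontrivial peripheral elements, used as letters. -/
def periB {G : Type*} [Group G] (PS : Finset (Subgroup G)) : Set G :=
  ⋃ P ∈ PS, ((P : Set G) \ {1})

/-- Evaluation in G of a relative word, i.e. a word over the alphabet Ã ⊔ B. -/
def reval (f : A → G) (PS : Finset (Subgroup G))
    (w : List ((A × Bool) ⊕ (periB PS))) : G :=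
  (w.map (Sum.elim (fun p : A × Bool => if p.2 then f p.1 else (f p.1)⁻¹) (fun b : periB PS => (b : G)))).prod

/-- Relative word length |g|_{A∪B}: least length of a relative word evaluating to g. -/
noncomputable def rellen (f : A → G) (PS : Finset (Subgroup G)) (g : G) : ℕ :=
  sInf {n | ∃ w : List ((A × Bool) ⊕ (periB PS)), reval f PS w = g ∧ w.length = n}

/-- H is relatively quasi-convex with constant k: for every h ∈ H, every relative
geodesic for h and every prefix u of it, some h' ∈ H satisfies |h'⁻¹·(value of u)|_A ≤ k. -/
def RelQCW (f : A → G) (PS : Finset (Subgroup G)) (H : Subgroup G) (k : ℕ) : Prop :=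
  ∀ h ∈ H, ∀ w : List ((A × Bool) ⊕ (periB PS)),
    reval f PS w = h → w.length = rellen f PS h →
    ∀ u, u <+: w → ∃ h' ∈ H, wlen f (h'⁻¹ * reval f PS u) ≤ k

/-- The left coset g·H as a subset of G. -/
def lcoset (g : G) (H : Subgroup G) : Set G := {x | ∃ h ∈ H, x = g * h}

/-- The double coset H·g·K as a subset of G. -/
def dcoset (H : Subgroup G) (g : G) (K : Subgroup G) : Set G :=
  {x | ∃ h ∈ H, ∃ k ∈ K, x = h * g * k}

/-- A subgroup of (G, PS) is hyperbolic if it is neither elliptic (finite) nor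
parabolic (contained in a conjugate of a peripheral subgroup). -/
def IsHypSubgroup {G : Type*} [Group G] (PS : Finset (Subgroup G)) (J : Subgroup G) : Prop :=
  ((J : Set G)).Infinite ∧ ¬ ∃ P ∈ PS, ∃ g : G, J ≤ conjG P g

/-- Property rBP_ν: whenever H, K are relatively quasi-convex with common constant k and
K, g₁H, …, g_nH are pairwise distinct subsets of G such that
K ∩ g₁Hg₁⁻¹ ∩ … ∩ g_nHg_n⁻¹ is a hyperbolic subgroup, some z ∈ G lies within |·|_A
distance ν(k) of K and of each coset g_iH. -/
def rBP (f : A → G) (PS : Finset (Subgroup G)) (ν : ℕ → ℕ) : Prop :=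
  ∀ (H K : Subgroup G) (k : ℕ), RelQCW f PS H k → RelQCW f PS K k →
    ∀ n : ℕ, 1 ≤ n → ∀ g : Fin n → G,
      Function.Injective
        (Fin.cons (K : Set G) (fun i => lcoset (g i) H) : Fin (n + 1) → Set G) →
      IsHypSubgroup PS (K ⊓ ⨅ i, conjG H (g i)⁻¹) →
      ∃ z : G, (∃ w ∈ K, wlen f (z⁻¹ * w) ≤ ν k) ∧
        ∀ i, ∃ w ∈ lcoset (g i) H, wlen f (z⁻¹ * w) ≤ ν k

section Stmt18Aux

theorem eval_append' (f : A → G) (u v : List (A × Bool)) :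
    eval f (u ++ v) = eval f u * eval f v := by
  simp [eval]

theorem eval_invWord' (f : A → G) (w : List (A × Bool)) :
    eval f (w.reverse.map fun p => (p.1, !p.2)) = (eval f w)⁻¹ := by
  induction w with
  | nil => simp [eval]
  | cons p t ih =>
    rw [List.reverse_cons, List.map_append, eval_append', ih]
    cases p with
    | mk a b => cases b <;> simp [eval, mul_inv_rev]

theorem exists_word' (f : A → G) (hsurj : Function.Surjective (eval f)) (g : G) :
    ∃ w : List (A × Bool), eval f w = g ∧ w.length = wlen f g := by
  have hne : {n | ∃ w : List (A × Bool), eval f w = g ∧ w.length = n}.Nonempty := by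
    obtain ⟨w, hw⟩ := hsurj g
    exact ⟨w.length, w, hw, rfl⟩
  exact Nat.sInf_mem hne

theorem wlen_le' (f : A → G) (w : List (A × Bool)) :
    wlen f (eval f w) ≤ w.length :=
  Nat.sInf_le ⟨w, rfl, rfl⟩

theorem wlen_one' (f : A → G) : wlen f (1 : G) = 0 :=
  Nat.le_zero.mp (by simpa [eval] using wlen_le' f [])

theorem wlen_mul_le' (f : A → G) (hsurj : Function.Surjective (eval f)) (x y : G) :
    wlen f (x * y) ≤ wlen f x + wlen f y := by
  obtain ⟨u, hu, hul⟩ := exists_word' f hsurj x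
  obtain ⟨v, hv, hvl⟩ := exists_word' f hsurj y
  calc wlen f (x * y) = wlen f (eval f (u ++ v)) := by rw [eval_append', hu, hv]
    _ ≤ (u ++ v).length := wlen_le' f _
    _ = wlen f x + wlen f y := by simp [hul, hvl]

theorem wlen_inv_le' (f : A → G) (hsurj : Function.Surjective (eval f)) (x : G) :
    wlen f x⁻¹ ≤ wlen f x := by
  obtain ⟨u, hu, hul⟩ := exists_word' f hsurj x
  calc wlen f x⁻¹ = wlen f (eval f (u.reverse.map fun p => (p.1, !p.2))) := by
        rw [eval_invWord', hu]
    _ ≤ (u.reverse.map fun p => (p.1, !p.2)).length := wlen_le' f _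
    _ = wlen f x := by simp [hul]

theorem wlen_inv' (f : A → G) (hsurj : Function.Surjective (eval f)) (x : G) :
    wlen f x⁻¹ = wlen f x :=
  le_antisymm (wlen_inv_le' f hsurj x)
    (by simpa using wlen_inv_le' f hsurj x⁻¹)

theorem mem_conjG' {J : Subgroup G} {g x : G} :
    x ∈ conjG J g ↔ g * x * g⁻¹ ∈ J := by
  simp only [conjG, Subgroup.mem_map, MulEquiv.toMonoidHom_eq_coe,
    MonoidHom.coe_coe, MulAut.conj_apply, inv_inv]
  constructor
  · rintro ⟨j, hj, rfl⟩
    have e : g * (g⁻¹ * j * g) * g⁻¹ = j := by group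
    rw [e]; exact hj
  · intro hx
    exact ⟨g * x * g⁻¹, hx, by group⟩

theorem key_lemma' (H K : Subgroup G) (g h r : G) (hh : h ∈ H) (hr : r ∈ K) :
    dcoset H g K = dcoset H (h⁻¹ * g * r) K ∧
    K ⊓ conjG H g = conjG (K ⊓ conjG H (h⁻¹ * g * r)) r⁻¹ := by
  constructor
  · ext x
    constructor
    · rintro ⟨h₁, hh₁, k₁, hk₁, rfl⟩
      exact ⟨h₁ * h, H.mul_mem hh₁ hh, r⁻¹ * k₁, K.mul_mem (K.inv_mem hr) hk₁, by group⟩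
    · rintro ⟨h₁, hh₁, k₁, hk₁, rfl⟩
      exact ⟨h₁ * h⁻¹, H.mul_mem hh₁ (H.inv_mem hh), r * k₁, K.mul_mem hr hk₁, by group⟩
  · ext x
    simp only [Subgroup.mem_inf, mem_conjG', inv_inv]
    constructor
    · rintro ⟨hxK, hxH⟩
      refine ⟨K.mul_mem (K.mul_mem (K.inv_mem hr) hxK) hr, ?_⟩
      have e : h⁻¹ * g * r * (r⁻¹ * x * r) * (h⁻¹ * g * r)⁻¹
          = h⁻¹ * (g * x * g⁻¹) * h := by group
      rw [e]
      exact H.mul_mem (H.mul_mem (H.inv_mem hh) hxH) hh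
    · rintro ⟨h1, h2⟩
      constructor
      · have := K.mul_mem (K.mul_mem hr h1) (K.inv_mem hr)
        have e : r * (r⁻¹ * x * r) * r⁻¹ = x := by group
        rwa [e] at this
      · have e2 : h⁻¹ * g * r * (r⁻¹ * x * r) * (h⁻¹ * g * r)⁻¹
            = h⁻¹ * (g * x * g⁻¹) * h := by group
        rw [e2] at h2
        have := H.mul_mem (H.mul_mem hh h2) (H.inv_mem hh)
        have e3 : h * (h⁻¹ * (g * x * g⁻¹) * h) * h⁻¹ = g * x * g⁻¹ := by group
        rwa [e3] at this

end Stmt18Aux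

/-- under Property rBP_ν, for relatively quasi-convex H, K with common
constant k: (1) every double coset HgK with K ∩ H^g hyperbolic has a representative s
with |s|_A ≤ 2ν(k); (2) moreover one can choose such an s together with r' ∈ K so that
K ∩ H^g = (K ∩ H^s)^{r'⁻¹}; consequently every hyperbolic intersection K ∩ H^g is
conjugate in K to a member of the finite family
{ K ∩ H^s : |s|_A ≤ 2ν(k), K ∩ H^s hyperbolic }. -/
theorem stmt18 (f : A → G) (hsurj : Function.Surjective (eval f))
    (PS : Finset (Subgroup G))
    (ν : ℕ → ℕ) (hν : Monotone ν) (hrBP : rBP f PS ν)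
    (H K : Subgroup G) (k : ℕ) (hH : RelQCW f PS H k) (hK : RelQCW f PS K k) :
    (∀ g : G, IsHypSubgroup PS (K ⊓ conjG H g) →
      ∃ s : G, wlen f s ≤ 2 * ν k ∧ dcoset H g K = dcoset H s K) ∧
    (∀ g : G, IsHypSubgroup PS (K ⊓ conjG H g) →
      ∃ s : G, ∃ r' ∈ K, wlen f s ≤ 2 * ν k ∧ dcoset H g K = dcoset H s K ∧
        K ⊓ conjG H g = conjG (K ⊓ conjG H s) r'⁻¹) ∧
    {J : Subgroup G | ∃ s : G, wlen f s ≤ 2 * ν k ∧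
      IsHypSubgroup PS (K ⊓ conjG H s) ∧ J = K ⊓ conjG H s}.Finite := by
  have main : ∀ g : G, IsHypSubgroup PS (K ⊓ conjG H g) →
      ∃ s : G, ∃ r' ∈ K, wlen f s ≤ 2 * ν k ∧ dcoset H g K = dcoset H s K ∧
        K ⊓ conjG H g = conjG (K ⊓ conjG H s) r'⁻¹ := by
    intro g hyp
    by_cases hcase : (K : Set G) = lcoset g⁻¹ H
    · -- degenerate case: K = g⁻¹H as sets, so g ∈ H and we may take s = 1.
      have h1 : (1 : G) ∈ lcoset g⁻¹ H := hcase ▸ K.one_mem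
      obtain ⟨h, hh, he⟩ := h1
      have hg : g ∈ H := by
        have : h = g := by
          have := he.symm
          rw [eq_comm] at he
          have : g * 1 = g * (g⁻¹ * h) := by rw [← he]
          simpa [mul_assoc] using this.symm
        exact this ▸ hh
      obtain ⟨hd, hc⟩ := key_lemma' H K g g 1 hg K.one_mem
      rw [mul_one, inv_mul_cancel] at hd hc
      refine ⟨1, 1, K.one_mem, ?_, hd, hc⟩
      rw [wlen_one' f]
      exact Nat.zero_le _
    · have hinj : Function.Injective
          (Fin.cons (K : Set G) (fun _ : Fin 1 => lcoset g⁻¹ H) : Fin 2 → Set G) := by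
        intro i j hij
        have h01 : (Fin.cons (K : Set G) (fun _ : Fin 1 => lcoset g⁻¹ H) :
            Fin 2 → Set G) 0 ≠ (Fin.cons (K : Set G)
            (fun _ : Fin 1 => lcoset g⁻¹ H) : Fin 2 → Set G) 1 := by
          rw [Fin.cons_zero, show (1 : Fin 2) = Fin.succ 0 from rfl, Fin.cons_succ]
          exact hcase
        fin_cases i <;> fin_cases j <;> simp_all
      have hhyp : IsHypSubgroup PS
          (K ⊓ ⨅ i : Fin 1, conjG H ((fun _ : Fin 1 => g⁻¹) i)⁻¹) := by
        simpa [inv_inv, iInf_const] using hyp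
      obtain ⟨z, ⟨r, hr, hr1⟩, hall⟩ :=
        hrBP H K k hH hK 1 le_rfl (fun _ => g⁻¹) hinj hhyp
      obtain ⟨w, hwmem, hw1⟩ := hall 0
      obtain ⟨h, hh, rfl⟩ := hwmem
      obtain ⟨hd, hc⟩ := key_lemma' H K g h r hh hr
      refine ⟨h⁻¹ * g * r, r, hr, ?_, hd, hc⟩
      have e : h⁻¹ * g * r = (z⁻¹ * (g⁻¹ * h))⁻¹ * (z⁻¹ * r) := by group
      rw [e]
      calc wlen f ((z⁻¹ * (g⁻¹ * h))⁻¹ * (z⁻¹ * r))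
          ≤ wlen f (z⁻¹ * (g⁻¹ * h))⁻¹ + wlen f (z⁻¹ * r) :=
            wlen_mul_le' f hsurj _ _
        _ = wlen f (z⁻¹ * (g⁻¹ * h)) + wlen f (z⁻¹ * r) := by
            rw [wlen_inv' f hsurj]
        _ ≤ ν k + ν k := add_le_add hw1 hr1
        _ = 2 * ν k := (two_mul _).symm
  refine ⟨?_, main, ?_⟩
  · intro g hyp
    obtain ⟨s, _, _, hs, hd, _⟩ := main g hyp
    exact ⟨s, hs, hd⟩
  · have hfin : {s : G | wlen f s ≤ 2 * ν k}.Finite := by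
      have hsub : {s : G | wlen f s ≤ 2 * ν k}
          ⊆ eval f '' {w : List (A × Bool) | w.length ≤ 2 * ν k} := by
        intro s hs
        obtain ⟨w, hw, hwl⟩ := exists_word' f hsurj s
        exact ⟨w, by rw [Set.mem_setOf_eq, hwl]; exact hs, hw⟩
      exact ((List.finite_length_le (A × Bool) (2 * ν k)).image _).subset hsub
    refine (hfin.image fun s => K ⊓ conjG H s).subset ?_
    rintro J ⟨s, hs, _, rfl⟩
    exact ⟨s, hs, rfl⟩
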